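/- Telescoping bound via DR ratio: if f has DR ratio γ_d > 0 and v ≤ w with {w−v} = {s_1,…,s_ℓ}, then f(w) − f(v) ≤ (1/γ_d)·Σ_{i=1}^ℓ (f(v+s_i) − f(v)). -/

import Mathlib

/-!
Go from `v` to `w` by adding unit vectors one at a time. Each step from `v + d` to
`v + d + e_s` raises `f` by at most `1/γ` times the marginal gain `f (v + e_s) - f v` at `v`,
by the DR inequality applied to `v ≤ v + d`; summing the steps telescopes to `f w - f v`.
-/

/-- The unit vector (indicator) of an element `s`. -/
def unitVec {S : Type*} [DecidableEq S] (s : S) : S → ℕ := fun i => if i = s then 1 else 0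

section

variable {S : Type*} [DecidableEq S]

theorem unitVec_eq_single (s : S) : unitVec s = Pi.single s 1 := by
  funext i
  simp [unitVec, Pi.single_apply]

variable [Fintype S]

theorem sum_unitVec_mul (s : S) (g : S → ℝ) : ∑ i, (unitVec s i : ℝ) * g i = g s := by
  simp [unitVec, ite_mul]

theorem unitVec_induction {p : (S → ℕ) → Prop} (zero : p 0)
    (add_unitVec : ∀ d s, p d → p (d + unitVec s)) (d : S → ℕ) : p d := by
  rw [← Finset.univ_sum_single d]
  induction (Finset.univ : Finset S) using Finset.induction_on with
  | empty => simpa using zero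
  | insert s t hs ih =>
    rw [Finset.sum_insert hs, add_comm]
    induction d s with
    | zero => simpa using ih
    | succ n ihn =>
      rw [Pi.single_add (f := fun _ : S => ℕ) s n 1, ← add_assoc, ← unitVec_eq_single]
      exact add_unitVec _ s ihn

theorem mul_sub_le_sum_marginal_of_dr {f : (S → ℕ) → ℝ} {γ : ℝ}
    (hDR : ∀ (s : S) (x y : S → ℕ), x ≤ y →
      γ * (f (y + unitVec s) - f y) ≤ f (x + unitVec s) - f x)
    (v d : S → ℕ) :
    γ * (f (v + d) - f v) ≤ ∑ s, (d s : ℝ) * (f (v + unitVec s) - f v) := by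
  induction d using unitVec_induction with
  | zero => simp
  | add_unitVec d s₀ ih =>
    have hstep := hDR s₀ v (v + d) le_self_add
    have hsum : ∑ s, ((d + unitVec s₀) s : ℝ) * (f (v + unitVec s) - f v)
        = ∑ s, (d s : ℝ) * (f (v + unitVec s) - f v) + (f (v + unitVec s₀) - f v) := by
      simp only [Pi.add_apply, Nat.cast_add, add_mul, Finset.sum_add_distrib, sum_unitVec_mul]
    rw [hsum, ← add_assoc]
    linarith

end

theorem telescoping_dr_bound_general
    {S : Type*} [Fintype S] [DecidableEq S]
    (f : (S → ℕ) → ℝ) (γd : ℝ)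
    (hγd : 0 < γd)
    (hDR : ∀ (s : S) (x y : S → ℕ), x ≤ y →
      γd * (f (y + unitVec s) - f y) ≤ f (x + unitVec s) - f x) :
    ∀ v w : S → ℕ, v ≤ w →
      f w - f v ≤ (1 / γd) * ∑ s : S, ((w s - v s : ℕ) : ℝ) * (f (v + unitVec s) - f v) := by
  intro v w hvw
  have h := mul_sub_le_sum_marginal_of_dr hDR v (w - v)
  rw [add_tsub_cancel_of_le hvw] at h
  rw [one_div_mul_eq_div, le_div_iff₀' hγd]
  exact h

/-- Telescoping bound via the DR ratio: `f(w) - f(v) ≤ (1/γd) Σ_{s ∈ {w-v}} δ_s(v)`. -/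
theorem telescoping_dr_bound
    {S : Type*} [Fintype S] [DecidableEq S]
    (f : (S → ℕ) → ℝ) (γd : ℝ)
    (hnonneg : ∀ x : S → ℕ, 0 ≤ f x)
    (hmono : ∀ v w : S → ℕ, v ≤ w → f v ≤ f w)
    (hzero : f 0 = 0)
    (hγd : 0 < γd)
    (hDR : ∀ (s : S) (x y : S → ℕ), x ≤ y →
      γd * (f (y + unitVec s) - f y) ≤ f (x + unitVec s) - f x) :
    ∀ v w : S → ℕ, v ≤ w →
      f w - f v ≤ (1 / γd) * ∑ s : S, ((w s - v s : ℕ) : ℝ) * (f (v + unitVec s) - f v) :=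
  telescoping_dr_bound_general f γd hγd hDR
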